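/- The function k(x,t;x′,t′) = √(2π) · exp(−(x−x′)²/(2(1+2(t+t′)))) / √(1+2(t+t′)) satisfies the heat equation in the first pair of arguments: ∂ₓ²k = ∂ₜk, for all (x,t,x′,t′) with t + t′ > −1/2. -/

import Mathlib

/-!
Write `k = √(2π) · g(1 + 2(t + t'), x - x')` with the Gaussian profile
`g(c, y) = exp(-y²/(2c)) / √c`. Differentiating directly, `∂²g/∂y² = (y²/c² - 1/c) g = 2 ∂g/∂c`,
and the chain rule through `c = 1 + 2(t + t')` contributes exactly the factor `∂c/∂t = 2`.
-/

open Real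

/-- The EPGP covariance function of the 1D heat equation. -/
noncomputable def heatKernel (x t x' t' : ℝ) : ℝ :=
  Real.sqrt (2 * Real.pi) * Real.exp (-(x - x') ^ 2 / (2 * (1 + 2 * (t + t')))) /
    Real.sqrt (1 + 2 * (t + t'))

noncomputable def gaussianProfile (c y : ℝ) : ℝ := exp (-y ^ 2 / (2 * c)) / √c

lemma heatKernel_eq_gaussianProfile (x t x' t' : ℝ) :
    heatKernel x t x' t' = √(2 * π) * gaussianProfile (1 + 2 * (t + t')) (x - x') := by
  rw [heatKernel, gaussianProfile, mul_div_assoc]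

lemma hasDerivAt_gaussianProfile (c y : ℝ) :
    HasDerivAt (gaussianProfile c) (-(y / c) * gaussianProfile c y) y := by
  have hexp : HasDerivAt (fun y => -y ^ 2 / (2 * c)) (-(y / c)) y :=
    ((hasDerivAt_pow 2 y).neg.div_const (2 * c)).congr_deriv (by ring)
  exact (hexp.exp.div_const √c).congr_deriv (by rw [gaussianProfile]; ring)

lemma deriv_gaussianProfile (c : ℝ) :
    deriv (gaussianProfile c) = fun y => -(y / c) * gaussianProfile c y :=
  funext fun y => (hasDerivAt_gaussianProfile c y).deriv

lemma deriv_deriv_gaussianProfile (c y : ℝ) :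
    deriv (deriv (gaussianProfile c)) y = (y ^ 2 / c ^ 2 - 1 / c) * gaussianProfile c y := by
  have hlin : HasDerivAt (fun y => -(y / c)) (-(1 / c)) y := ((hasDerivAt_id y).div_const c).neg
  rw [deriv_gaussianProfile, (hlin.fun_mul (hasDerivAt_gaussianProfile c y)).deriv]
  ring

lemma hasDerivAt_gaussianProfile_variance {c : ℝ} (hc : 0 < c) (y : ℝ) :
    HasDerivAt (fun c => gaussianProfile c y)
      ((y ^ 2 / c ^ 2 - 1 / c) / 2 * gaussianProfile c y) c := by
  have hexp : HasDerivAt (fun c => -y ^ 2 / (2 * c)) (y ^ 2 / (2 * c ^ 2)) c :=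
    (((hasDerivAt_id c).const_mul 2).inv (by positivity)).const_mul (-y ^ 2) |>.congr_deriv
      (by simp; field_simp)
  refine (hexp.exp.div (hasDerivAt_sqrt hc.ne') (sqrt_pos.2 hc).ne').congr_deriv ?_
  have hsq : √c ^ 2 = c := sq_sqrt hc.le
  rw [gaussianProfile]
  field_simp
  rw [hsq]
  ring

theorem deriv_deriv_gaussianProfile_eq_two_mul_deriv_variance {c : ℝ} (hc : 0 < c) (y : ℝ) :
    deriv (deriv (gaussianProfile c)) y = 2 * deriv (fun c => gaussianProfile c y) c := by
  rw [deriv_deriv_gaussianProfile, (hasDerivAt_gaussianProfile_variance hc y).deriv]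
  ring

/-- The EPGP heat kernel satisfies the heat equation ∂ₓ²k = ∂ₜk in the first
    pair of arguments, whenever t + t' > −1/2. -/
theorem heatKernel_satisfies_heat_equation (x t x' t' : ℝ) (h : t + t' > -1/2) :
    deriv (deriv (fun y : ℝ => heatKernel y t x' t')) x
      = deriv (fun s : ℝ => heatKernel x s x' t') t := by
  have hc : 0 < 1 + 2 * (t + t') := by linarith
  simp only [heatKernel_eq_gaussianProfile]
  have hvar : HasDerivAt (fun s => 1 + 2 * (s + t')) 2 t := by
    simpa using (((hasDerivAt_id t).add_const t').const_mul 2).const_add 1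
  have htime : HasDerivAt (fun s => gaussianProfile (1 + 2 * (s + t')) (x - x'))
      (2 * deriv (fun c => gaussianProfile c (x - x')) (1 + 2 * (t + t'))) t :=
    (((hasDerivAt_gaussianProfile_variance hc (x - x')).differentiableAt.hasDerivAt.comp t
      hvar :)).congr_deriv (mul_comm _ _)
  simp only [deriv_const_mul_field', deriv_comp_sub_const]
  rw [htime.deriv, deriv_deriv_gaussianProfile_eq_two_mul_deriv_variance hc]
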